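/- arXiv:2409.13380 — 2 statements merged into one kernel-verified Lean document; each statement's English description precedes it below -/
import Mathlib

section
/- Let G=(V,E) be a finite simple graph, ω: E → ℚ an edge-weight function, k an integer, and let χ, χ': V → {1,…,c} be c-colorings of G such that χ' is an improving k-neighbor of χ. Then there exists a connected component C of the induced subgraph G[D_flip(χ,χ')] such that the c-coloring χ̃ defined by χ̃(v) := χ'(v) for v ∈ C and χ̃(v) := χ(v) for v ∈ V\C is an improving k-neighbor of χ with D_flip(χ,χ̃) = C. -/
/-!
The gain ω(E(χ')) − ω(E(χ)) is the sum, over the components `C` of `G[D_flip(χ,χ')]`, of the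
gains of the partial flips that recolor only `C`. Indeed, whether an edge is properly colored
depends only on the colors of its endpoints, and the flipped endpoints of an edge always lie in
a single component, so each edge changes under exactly the partial flip of that component (or
under none, if it has no flipped endpoint). As the total gain is positive, some component has
positive gain, and its flip, being contained in `D_flip(χ,χ')`, has at most `k` vertices.
-/

open Finset
open scoped Classical

/-- The finset of properly colored edges of `G` under the coloring `χ`. -/
noncomputable def properEdges {V : Type*} [Fintype V] {α : Type*}
    (G : SimpleGraph V) (χ : V → α) : Finset (Sym2 V) :=
  G.edgeFinset.filter fun e => ¬ (Sym2.map χ e).IsDiag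

/-- The flip between two colorings: the set of vertices where they differ. -/
noncomputable def flipSet {V : Type*} [Fintype V] {α : Type*}
    (χ χ' : V → α) : Finset V :=
  univ.filter fun v => χ v ≠ χ' v

/-- `χ'` is an improving `k`-neighbor of `χ` with respect to the edge
weights `ω`. -/
def IsImprovingKNeighbor {V : Type*} [Fintype V] {c : ℕ}
    (G : SimpleGraph V) (ω : Sym2 V → ℚ) (k : ℕ) (χ χ' : V → Fin c) : Prop :=
  (flipSet χ χ').card ≤ k ∧
    (∑ e ∈ properEdges G χ, ω e) < (∑ e ∈ properEdges G χ', ω e)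

/-- The set of connected components of the subgraph of `G` induced by `S`. -/
noncomputable def componentsOf {V : Type*} [Fintype V] (G : SimpleGraph V)
    (S : Finset V) : Finset ((G.induce (↑S : Set V)).ConnectedComponent) :=
  (Finset.univ : Finset (↑S : Set V)).image
    (G.induce (↑S : Set V)).connectedComponentMk

/-- The vertex set (as a finset of vertices of `G`) of a connected component
of the subgraph of `G` induced by `S`. -/
noncomputable def compVerts {V : Type*} [Fintype V] (G : SimpleGraph V)
    (S : Finset V) (C : (G.induce (↑S : Set V)).ConnectedComponent) : Finset V :=
  S.filter fun x =>
    ∃ h : x ∈ (↑S : Set V), (G.induce (↑S : Set V)).connectedComponentMk ⟨x, h⟩ = C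

section Patching

variable {V α β ι : Type*} [DecidableEq V] [AddCommGroup β]

theorem sum_piecewise_sub_of_eqOn {T : Set V} (q : (V → α) → β)
    (hq : ∀ σ τ : V → α, Set.EqOn σ τ T → q σ = q τ) {χ χ' : V → α}
    {s : Finset ι} {P : ι → Finset V} (hcover : ∀ x ∈ T, χ x ≠ χ' x → ∃ i ∈ s, x ∈ P i)
    (hmeet : ∀ i ∈ s, ∀ j ∈ s, ∀ x ∈ T, ∀ y ∈ T, x ∈ P i → y ∈ P j → i = j) :
    ∑ i ∈ s, (q ((P i).piecewise χ' χ) - q χ) = q χ' - q χ := by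
  by_cases hT : ∃ i ∈ s, ∃ x ∈ T, x ∈ P i
  · obtain ⟨i₀, hi₀, x₀, hx₀T, hx₀⟩ := hT
    have hother : ∀ j ∈ s, j ≠ i₀ → q ((P j).piecewise χ' χ) - q χ = 0 := by
      refine fun j hj hne => sub_eq_zero.mpr (hq _ _ fun y hy => ?_)
      exact piecewise_eq_of_notMem _ _ _ fun hyj => hne (hmeet j hj i₀ hi₀ y hy x₀ hx₀T hyj hx₀)
    rw [sum_eq_single_of_mem i₀ hi₀ hother]
    congr 1
    refine hq _ _ fun y hy => ?_
    by_cases hyi : y ∈ P i₀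
    · exact piecewise_eq_of_mem _ _ _ hyi
    · rw [piecewise_eq_of_notMem _ _ _ hyi]
      by_contra hne
      obtain ⟨j, hj, hyj⟩ := hcover y hy hne
      exact hyi (hmeet j hj i₀ hi₀ y hy x₀ hx₀T hyj hx₀ ▸ hyj)
  · push Not at hT
    rw [hq χ' χ fun x hx => not_not.mp fun hne => ?_, sub_self]
    · exact sum_eq_zero fun i hi => sub_eq_zero.mpr <|
        hq _ _ fun x hx => piecewise_eq_of_notMem _ _ _ (hT i hi x hx)
    · obtain ⟨i, hi, hxi⟩ := hcover x hx (Ne.symm hne)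
      exact hT i hi x hx hxi

end Patching

theorem SimpleGraph.eq_or_adj_of_mem_edgeSet {V : Type*} {G : SimpleGraph V} {e : Sym2 V}
    (he : e ∈ G.edgeSet) {x y : V} (hx : x ∈ e) (hy : y ∈ e) : x = y ∨ G.Adj x y := by
  induction e using Sym2.ind with
  | _ u v =>
    rw [SimpleGraph.mem_edgeSet] at he
    rcases Sym2.mem_iff.mp hx with rfl | rfl <;> rcases Sym2.mem_iff.mp hy with rfl | rfl <;>
      simp [he, he.symm]

section ProperEdges

variable {V α β ι : Type*} [Fintype V] [DecidableEq V] [AddCommGroup β]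

theorem flipSet_piecewise_of_subset {χ χ' : V → α} {S : Finset V} (hS : S ⊆ flipSet χ χ') :
    flipSet χ (S.piecewise χ' χ) = S := by
  ext x
  by_cases hx : x ∈ S
  · simpa [flipSet, hx] using hS hx
  · simp [flipSet, hx]

theorem sum_properEdges_piecewise_sub (G : SimpleGraph V) (ω : Sym2 V → β) {χ χ' : V → α}
    {s : Finset ι} {P : ι → Finset V} (hcover : ∀ x, χ x ≠ χ' x → ∃ i ∈ s, x ∈ P i)
    (hsep : ∀ i ∈ s, ∀ j ∈ s, ∀ x ∈ P i, ∀ y ∈ P j, x = y ∨ G.Adj x y → i = j) :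
    ∑ i ∈ s, (∑ e ∈ properEdges G ((P i).piecewise χ' χ), ω e - ∑ e ∈ properEdges G χ, ω e) =
      ∑ e ∈ properEdges G χ', ω e - ∑ e ∈ properEdges G χ, ω e := by
  simp only [properEdges, sum_filter, ← sum_sub_distrib]
  rw [sum_comm]
  refine sum_congr rfl fun e he => ?_
  refine sum_piecewise_sub_of_eqOn (T := {x | x ∈ e})
    (fun σ => if ¬(Sym2.map σ e).IsDiag then ω e else 0)
    (fun σ τ h => by simp only [Sym2.map_congr h]) (fun x _ => hcover x) ?_
  intro i hi j hj x hx y hy hxi hyj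
  exact hsep i hi j hj x hxi y hyj
    (SimpleGraph.eq_or_adj_of_mem_edgeSet (SimpleGraph.mem_edgeFinset.mp he) hx hy)

end ProperEdges

section Components

variable {V : Type*} [Fintype V] (G : SimpleGraph V) (S : Finset V)

theorem compVerts_subset (C : (G.induce (↑S : Set V)).ConnectedComponent) :
    compVerts G S C ⊆ S :=
  filter_subset _ _

theorem mem_compVerts_connectedComponentMk {x : V} (hx : x ∈ S) :
    x ∈ compVerts G S ((G.induce (↑S : Set V)).connectedComponentMk ⟨x, hx⟩) :=
  mem_filter.mpr ⟨hx, hx, rfl⟩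

theorem connectedComponentMk_mem_componentsOf {x : V} (hx : x ∈ S) :
    (G.induce (↑S : Set V)).connectedComponentMk ⟨x, hx⟩ ∈ componentsOf G S :=
  mem_image_of_mem _ (mem_univ _)

theorem eq_of_mem_compVerts_of_eq_or_adj {C C' : (G.induce (↑S : Set V)).ConnectedComponent}
    {x y : V} (hx : x ∈ compVerts G S C) (hy : y ∈ compVerts G S C') (hxy : x = y ∨ G.Adj x y) :
    C = C' := by
  obtain ⟨-, _, rfl⟩ := mem_filter.mp hx
  obtain ⟨-, _, rfl⟩ := mem_filter.mp hy
  rcases hxy with rfl | hadj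
  · rfl
  · exact SimpleGraph.ConnectedComponent.sound (SimpleGraph.Adj.reachable (G := G.induce _) hadj)

end Components

/-- If `χ'` is an improving `k`-neighbor of `χ`, then there is a connected
component `C` of the subgraph induced by `D_flip(χ,χ')` such that the coloring
agreeing with `χ'` on `C` and with `χ` elsewhere is an improving `k`-neighbor
of `χ` whose flip with `χ` is exactly the vertex set of `C`. -/
theorem exists_component_improving
    {V : Type*} [Fintype V] [DecidableEq V] {c : ℕ}
    (G : SimpleGraph V) (ω : Sym2 V → ℚ) (k : ℕ) (χ χ' : V → Fin c)
    (h : IsImprovingKNeighbor G ω k χ χ') :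
    ∃ C ∈ componentsOf G (flipSet χ χ'),
      IsImprovingKNeighbor G ω k χ
        (fun v => if v ∈ compVerts G (flipSet χ χ') C then χ' v else χ v) ∧
      flipSet χ (fun v => if v ∈ compVerts G (flipSet χ χ') C then χ' v else χ v) =
        compVerts G (flipSet χ χ') C := by
  obtain ⟨hk, himp⟩ := h
  set D := flipSet χ χ'
  have hgain := sum_properEdges_piecewise_sub G ω (s := componentsOf G D) (P := compVerts G D)
    (fun x hx => ⟨_, connectedComponentMk_mem_componentsOf G D (by simpa [D, flipSet] using hx),
      mem_compVerts_connectedComponentMk G D _⟩)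
    (fun _ _ _ _ _ hx _ hy hxy => eq_of_mem_compVerts_of_eq_or_adj G D hx hy hxy)
  rw [← sub_pos, ← hgain, ← sum_const_zero] at himp
  obtain ⟨C, hC, hpos⟩ := exists_lt_of_sum_lt himp
  have hflip := flipSet_piecewise_of_subset (compVerts_subset G D C)
  exact ⟨C, hC, ⟨(congrArg card hflip).trans_le ((card_le_card (compVerts_subset G D C)).trans hk),
    sub_pos.mp hpos⟩, hflip⟩
end

section
/- Let G=(V,E) be a finite simple graph, ω: E → ℚ an edge-weight function, k an integer, and χ: V → {1,…,c} a c-coloring of G. Then for every inclusion-minimal improving k-neighbor χ' of χ, the vertex set D_flip(χ,χ') is connected in G, i.e., the induced subgraph G[D_flip(χ,χ')] is connected. -/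
/-! Every improving flip that is disconnected splits into two parts with no edge between them.
Each edge then sees at most one part, so the gains of the two partial flips add up to the gain
of the whole flip; one part is therefore already improving, against minimality. -/

open Finset
open scoped Classical

namespace SimpleGraph

variable {V : Type*} (G : SimpleGraph V)

theorem connected_induce_of_forall_separated_eq {D : Finset V} (hD : D.Nonempty)
    (h : ∀ S ⊆ D, S.Nonempty → (∀ a ∈ S, ∀ b ∈ D \ S, ¬ G.Adj a b) → S = D) :
    (G.induce (D : Set V)).Connected := by
  refine (connected_iff _).2 ⟨fun x y => ?_, hD.coe_sort⟩
  set S : Finset V :=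
    (univ.filter ((G.induce (D : Set V)).Reachable x)).map (Function.Embedding.subtype _)
  have hx : (x : V) ∈ S := mem_map.2 ⟨x, by simp, rfl⟩
  have hSD : S ⊆ D := fun v hv => by
    obtain ⟨w, -, rfl⟩ := mem_map.1 hv
    exact w.2
  have hclosed : ∀ a ∈ S, ∀ b ∈ D \ S, ¬ G.Adj a b := by
    intro a ha b hb hab
    obtain ⟨w, hw, rfl⟩ := mem_map.1 ha
    obtain ⟨hbD, hbS⟩ := mem_sdiff.1 hb
    have hadj : (G.induce (D : Set V)).Adj w ⟨b, hbD⟩ := by simpa using hab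
    exact hbS (mem_map.2 ⟨⟨b, hbD⟩, by simpa using (mem_filter.1 hw).2.trans hadj.reachable, rfl⟩)
  have hy : (y : V) ∈ S := by
    rw [h S hSD ⟨x, hx⟩ hclosed]
    exact y.2
  obtain ⟨w, hw, hwy⟩ := mem_map.1 hy
  exact Subtype.ext hwy ▸ (mem_filter.1 hw).2

end SimpleGraph

section Flips

variable {V α : Type*} [Fintype V] {χ χ' : V → α} {S T : Finset V}

@[simp]
theorem mem_flipSet {v : V} : v ∈ flipSet χ χ' ↔ χ v ≠ χ' v := by
  simp [flipSet]

theorem flipSet_nonempty_iff : (flipSet χ χ').Nonempty ↔ χ ≠ χ' := by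
  simp [Finset.Nonempty, funext_iff]

theorem flipSet_piecewise (hS : S ⊆ flipSet χ χ') : flipSet χ (S.piecewise χ' χ) = S := by
  ext v
  by_cases hv : v ∈ S
  · simpa [hv] using hS hv
  · simp [hv]

theorem piecewise_apply_of_flipSet_subset_union (hflip : flipSet χ χ' ⊆ S ∪ T) {v : V}
    (hv : v ∉ T) : S.piecewise χ' χ v = χ' v := by
  by_cases hvS : v ∈ S
  · exact piecewise_eq_of_mem _ _ _ hvS
  · rw [piecewise_eq_of_notMem _ _ _ hvS]
    by_contra hne
    simpa [hvS, hv] using hflip (mem_flipSet.2 hne)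

variable (G : SimpleGraph V)

theorem map_piecewise_eq_or (hST : Disjoint S T) (hflip : flipSet χ χ' ⊆ S ∪ T)
    (hcut : ∀ a ∈ S, ∀ b ∈ T, ¬ G.Adj a b) {e : Sym2 V} (he : e ∈ G.edgeSet) :
    (e.map (S.piecewise χ' χ) = e.map χ' ∧ e.map (T.piecewise χ' χ) = e.map χ) ∨
      (e.map (S.piecewise χ' χ) = e.map χ ∧ e.map (T.piecewise χ' χ) = e.map χ') := by
  induction e using Sym2.ind with
  | _ a b =>
    have hab : G.Adj a b := he
    have hflip' : flipSet χ χ' ⊆ T ∪ S := union_comm S T ▸ hflip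
    by_cases hT : a ∈ T ∨ b ∈ T
    · have haS : a ∉ S := fun ha => hT.elim (disjoint_left.1 hST ha) (hcut a ha b · hab)
      have hbS : b ∉ S := fun hb => hT.elim (hcut b hb a · hab.symm) (disjoint_left.1 hST hb)
      right
      simp [piecewise_eq_of_notMem _ _ _ haS, piecewise_eq_of_notMem _ _ _ hbS,
        piecewise_apply_of_flipSet_subset_union hflip' haS,
        piecewise_apply_of_flipSet_subset_union hflip' hbS]
    · obtain ⟨haT, hbT⟩ := not_or.1 hT
      left
      simp [piecewise_eq_of_notMem _ _ _ haT, piecewise_eq_of_notMem _ _ _ hbT,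
        piecewise_apply_of_flipSet_subset_union hflip haT,
        piecewise_apply_of_flipSet_subset_union hflip hbT]

theorem sum_properEdges_piecewise_add_piecewise (ω : Sym2 V → ℚ) (hST : Disjoint S T)
    (hflip : flipSet χ χ' ⊆ S ∪ T) (hcut : ∀ a ∈ S, ∀ b ∈ T, ¬ G.Adj a b) :
    (∑ e ∈ properEdges G (S.piecewise χ' χ), ω e) + ∑ e ∈ properEdges G (T.piecewise χ' χ), ω e =
      (∑ e ∈ properEdges G χ', ω e) + ∑ e ∈ properEdges G χ, ω e := by
  simp only [properEdges, sum_filter, ← sum_add_distrib]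
  refine sum_congr rfl fun e he => ?_
  rcases map_piecewise_eq_or G hST hflip hcut (SimpleGraph.mem_edgeFinset.1 he) with
    ⟨h₁, h₂⟩ | ⟨h₁, h₂⟩
  · rw [h₁, h₂]
  · rw [h₁, h₂, add_comm]

end Flips

theorem IsImprovingKNeighbor.piecewise {V : Type*} [Fintype V] {c : ℕ} {G : SimpleGraph V}
    {ω : Sym2 V → ℚ} {k : ℕ} {χ χ' : V → Fin c} (h : IsImprovingKNeighbor G ω k χ χ')
    {S : Finset V} (hS : S ⊆ flipSet χ χ')
    (hgain : (∑ e ∈ properEdges G χ, ω e) < ∑ e ∈ properEdges G (S.piecewise χ' χ), ω e) :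
    IsImprovingKNeighbor G ω k χ (S.piecewise χ' χ) :=
  ⟨by rw [flipSet_piecewise hS]; exact (card_le_card hS).trans h.1, hgain⟩

theorem flip_of_minimal_improving_connected_general
    {V : Type*} [Fintype V] {c : ℕ}
    (G : SimpleGraph V) (ω : Sym2 V → ℚ) (k : ℕ) (χ χ' : V → Fin c)
    (himp : IsImprovingKNeighbor G ω k χ χ')
    (hmin : ∀ χ'' : V → Fin c, IsImprovingKNeighbor G ω k χ χ'' →
      ¬ flipSet χ χ'' ⊂ flipSet χ χ') :
    (G.induce (↑(flipSet χ χ') : Set V)).Connected := by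
  set D := flipSet χ χ'
  have hDne : D.Nonempty := flipSet_nonempty_iff.2 fun h => by subst h; exact lt_irrefl _ himp.2
  refine G.connected_induce_of_forall_separated_eq hDne fun S hSD hS hcut => ?_
  by_contra hne
  have hsum := sum_properEdges_piecewise_add_piecewise G ω disjoint_sdiff
    (union_sdiff_of_subset hSD).ge hcut
  have hgain : (∑ e ∈ properEdges G χ, ω e) < ∑ e ∈ properEdges G (S.piecewise χ' χ), ω e ∨
      (∑ e ∈ properEdges G χ, ω e) < ∑ e ∈ properEdges G ((D \ S).piecewise χ' χ), ω e := by
    by_contra! h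
    linarith [himp.2]
  rcases hgain with hgain | hgain
  · refine hmin _ (himp.piecewise hSD hgain) ?_
    rw [flipSet_piecewise hSD]
    exact hSD.ssubset_of_ne hne
  · refine hmin _ (himp.piecewise sdiff_subset hgain) ?_
    rw [flipSet_piecewise sdiff_subset]
    exact sdiff_ssubset hSD hS

/-- For every inclusion-minimal improving `k`-neighbor `χ'` of `χ`, the flip
`D_flip(χ,χ')` induces a connected subgraph of `G`. -/
theorem flip_of_minimal_improving_connected
    {V : Type*} [Fintype V] [DecidableEq V] {c : ℕ}
    (G : SimpleGraph V) (ω : Sym2 V → ℚ) (k : ℕ) (χ χ' : V → Fin c)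
    (himp : IsImprovingKNeighbor G ω k χ χ')
    (hmin : ∀ χ'' : V → Fin c, IsImprovingKNeighbor G ω k χ χ'' →
      ¬ flipSet χ χ'' ⊂ flipSet χ χ') :
    (G.induce (↑(flipSet χ χ') : Set V)).Connected :=
  flip_of_minimal_improving_connected_general G ω k χ χ' himp hmin
end
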